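/- Let (v_l)_{l≥1} be a strictly increasing sequence of nonnegative real numbers that is not too dense. For each l, let S_l be a nonempty finite set with weight function w_l : S_l → [0,∞) satisfying w_l(x) ≥ v_l for every x ∈ S_l, and let R_l be a real number satisfying ∑_{x∈S_l} e^{−w_l(x)·R_l} = 1. Assume α := limsup_{l→∞} R_l is finite. Then the double series ∑_{l=1}^∞ ∑_{x∈S_l} e^{−w_l(x)·s} converges for every real s > α and diverges (partial sums tend to +∞) for every real s < α. In other words, the abscissa of convergence of the generating function equals limsup_{l→∞} R_l. -/

import Mathlib

/-- A sequence `a` of real numbers is *not too dense* if there exist constants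
`L ≥ 0` and `K ≥ 0` such that for every natural number `n`, the number of
indices `k` with `a k < n` is at most `L * n ^ K`. -/
def NotTooDense (a : ℕ → ℝ) : Prop :=
  ∃ L K : ℝ, 0 ≤ L ∧ 0 ≤ K ∧ ∀ k n : ℕ, a k < n → (k + 1 : ℝ) ≤ L * (n : ℝ) ^ K

-- single power bound: x^m / m! ≤ exp x
lemma pow_div_fact_le_exp {x : ℝ} (hx : 0 ≤ x) (m : ℕ) :
    x ^ m / m.factorial ≤ Real.exp x := by
  have h := Real.sum_le_exp_of_nonneg hx (m + 1)
  refine le_trans ?_ h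
  have : x ^ m / m.factorial = (fun i => x ^ i / i.factorial) m := rfl
  rw [this]
  exact Finset.single_le_sum (f := fun i => x ^ i / (i.factorial : ℝ))
    (fun i _ => by positivity) (Finset.self_mem_range_succ m)

lemma summable_exp_neg_rpow {c p : ℝ} (hc : 0 < c) (hp : 0 < p) :
    Summable (fun k : ℕ => Real.exp (-(c * ((k : ℝ) + 1) ^ p))) := by
  obtain ⟨m, hm⟩ : ∃ m : ℕ, 2 ≤ p * m := by
    refine ⟨⌈2 / p⌉₊, ?_⟩
    have h1 : 2 / p ≤ (⌈2 / p⌉₊ : ℝ) := Nat.le_ceil _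
    calc (2 : ℝ) = p * (2 / p) := by field_simp
      _ ≤ p * ⌈2 / p⌉₊ := by nlinarith
  have hC : 0 < (m.factorial : ℝ) / c ^ m := by positivity
  apply Summable.of_nonneg_of_le (fun k => (Real.exp_pos _).le)
    (f := fun k : ℕ => ((m.factorial : ℝ) / c ^ m) * ((k : ℝ) + 1) ^ (-(2 : ℝ)))
  · intro k
    have hk1 : (1 : ℝ) ≤ (k : ℝ) + 1 := by
      have := Nat.cast_nonneg (α := ℝ) k; linarith
    have hk0 : (0 : ℝ) ≤ (k : ℝ) + 1 := by positivity
    set y : ℝ := ((k : ℝ) + 1) ^ p with hy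
    have hy0 : 0 < y := Real.rpow_pos_of_pos (by positivity) p
    have hx0 : 0 < c * y := by positivity
    have hb : (c * y) ^ m / m.factorial ≤ Real.exp (c * y) := pow_div_fact_le_exp hx0.le m
    have hb' : (c * y) ^ m ≤ Real.exp (c * y) * m.factorial :=
      (div_le_iff₀ (by positivity)).mp hb
    have h2 : Real.exp (-(c * y)) ≤ (m.factorial : ℝ) / (c * y) ^ m := by
      rw [le_div_iff₀ (pow_pos hx0 m)]
      calc Real.exp (-(c * y)) * (c * y) ^ m
          ≤ Real.exp (-(c * y)) * (Real.exp (c * y) * m.factorial) :=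
            mul_le_mul_of_nonneg_left hb' (Real.exp_pos _).le
        _ = m.factorial := by
            rw [← mul_assoc, ← Real.exp_add, neg_add_cancel, Real.exp_zero, one_mul]
    refine h2.trans ?_
    have hym : y ^ m = ((k : ℝ) + 1) ^ (p * m) := by
      rw [hy, ← Real.rpow_natCast (((k : ℝ) + 1) ^ p) m, ← Real.rpow_mul hk0]
    have hmono : ((k : ℝ) + 1) ^ (-(p * m)) ≤ ((k : ℝ) + 1) ^ (-(2 : ℝ)) :=
      Real.rpow_le_rpow_of_exponent_le hk1 (by linarith)
    have : (m.factorial : ℝ) / (c * y) ^ m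
        = ((m.factorial : ℝ) / c ^ m) * ((k : ℝ) + 1) ^ (-(p * m)) := by
      rw [mul_pow, hym, Real.rpow_neg hk0]
      field_simp
    rw [this]
    exact mul_le_mul_of_nonneg_left hmono hC.le
  · have hs : Summable (fun n : ℕ => ((n : ℝ)) ^ (-(2 : ℝ))) :=
      Real.summable_nat_rpow.mpr (by norm_num)
    have hs2 : Summable (fun n : ℕ => (((n + 1 : ℕ) : ℝ)) ^ (-(2 : ℝ))) :=
      (_root_.summable_nat_add_iff 1).mpr hs
    have hs3 : Summable (fun n : ℕ => (((n : ℝ)) + 1) ^ (-(2 : ℝ))) := by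
      convert hs2 using 2 with n; push_cast; ring_nf
    exact hs3.mul_left _

lemma ntd_summable {v : ℕ → ℝ} (hv0 : ∀ l, 0 ≤ v l) (hvd : NotTooDense v)
    {δ : ℝ} (hδ : 0 < δ) : Summable (fun l => Real.exp (-δ * v l)) := by
  obtain ⟨L, K, hL0, hK0, hb⟩ := hvd
  set L' := max L 1 with hL'
  set K' := max K 1 with hK'
  have hL1 : (1 : ℝ) ≤ L' := le_max_right _ _
  have hK1 : (1 : ℝ) ≤ K' := le_max_right _ _
  have hL'0 : (0 : ℝ) < L' := by linarith
  have hK'0 : (0 : ℝ) < K' := by linarith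
  have key : ∀ k : ℕ, ((k : ℝ) + 1) ≤ L' * (v k + 1) ^ K' := by
    intro k
    set n : ℕ := ⌊v k⌋₊ + 1 with hn
    have hvk : v k < n := by
      have := Nat.lt_floor_add_one (v k); exact_mod_cast this
    have hn1 : (1 : ℝ) ≤ (n : ℝ) := by exact_mod_cast Nat.one_le_iff_ne_zero.mpr (by omega)
    have hnle : (n : ℝ) ≤ v k + 1 := by
      have := Nat.floor_le (hv0 k)
      push_cast [hn]; linarith
    have h1 := hb k n hvk
    have h2 : (n : ℝ) ^ K ≤ (n : ℝ) ^ K' :=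
      Real.rpow_le_rpow_of_exponent_le hn1 (le_max_left _ _)
    have h3 : (n : ℝ) ^ K' ≤ (v k + 1) ^ K' :=
      Real.rpow_le_rpow (by linarith) hnle hK'0.le
    have h4 : (0 : ℝ) ≤ (n : ℝ) ^ K := Real.rpow_nonneg (by linarith) _
    calc ((k : ℝ) + 1) ≤ L * (n : ℝ) ^ K := h1
      _ ≤ L' * (n : ℝ) ^ K := by apply mul_le_mul_of_nonneg_right (le_max_left _ _) h4
      _ ≤ L' * (v k + 1) ^ K' := by
          apply mul_le_mul_of_nonneg_left (h2.trans h3) hL'0.le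
  have key2 : ∀ k : ℕ, (((k : ℝ) + 1) / L') ^ (1 / K') ≤ v k + 1 := by
    intro k
    have h0 : (0 : ℝ) ≤ ((k : ℝ) + 1) / L' := by positivity
    have h1 : ((k : ℝ) + 1) / L' ≤ (v k + 1) ^ K' := by
      rw [div_le_iff₀ hL'0]; linarith [key k, mul_comm L' ((v k + 1) ^ K')]
    have := Real.rpow_le_rpow h0 h1 (by positivity : (0:ℝ) ≤ 1 / K')
    rwa [← Real.rpow_mul (by linarith [hv0 k]), mul_one_div, div_self hK'0.ne',
      Real.rpow_one] at this
  set c : ℝ := δ / L' ^ (1 / K') with hc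
  have hc0 : 0 < c := by positivity
  apply Summable.of_nonneg_of_le (fun k => (Real.exp_pos _).le)
    (f := fun k : ℕ => Real.exp δ * Real.exp (-(c * ((k : ℝ) + 1) ^ (1 / K'))))
  · intro k
    rw [← Real.exp_add]
    apply Real.exp_le_exp.mpr
    have hdiv : (((k : ℝ) + 1) / L') ^ (1 / K')
        = ((k : ℝ) + 1) ^ (1 / K') / L' ^ (1 / K') :=
      Real.div_rpow (by positivity) hL'0.le (1 / K')
    have h5 : c * ((k : ℝ) + 1) ^ (1 / K') = δ * ((((k : ℝ) + 1) / L') ^ (1 / K')) := by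
      rw [hdiv, hc]; ring
    have h6 : δ * ((((k : ℝ) + 1) / L') ^ (1 / K')) ≤ δ * (v k + 1) :=
      mul_le_mul_of_nonneg_left (key2 k) hδ.le
    nlinarith [key2 k]
  · exact (summable_exp_neg_rpow hc0 (by positivity)).mul_left _

/-- Let `(v_l)` be a strictly increasing, not too dense sequence of nonnegative
reals.  For each `l`, let `S l` be a nonempty finite set with nonnegative
weights `w l x ≥ v l`, and let `R l` be the characteristic root of level `l`,
i.e. `∑_{x ∈ S l} e^(−w l x · R l) = 1`.  If `α = limsup R l` (in `EReal`) is
finite, then the double series `∑_l ∑_{x ∈ S l} e^(−w l x · s)` converges for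
every real `s > α` and its partial sums tend to `+∞` for every real `s < α`:
the abscissa of convergence of the generating function equals `limsup R l`. -/
theorem abscissa_of_convergence_eq_limsup_charRoot
    (v : ℕ → ℝ) (hv : StrictMono v) (hv0 : ∀ l, 0 ≤ v l) (hvd : NotTooDense v)
    (S : ℕ → Type) [∀ l, Fintype (S l)] [∀ l, Nonempty (S l)]
    (w : ∀ l, S l → ℝ) (hw0 : ∀ l (x : S l), 0 ≤ w l x)
    (hw : ∀ l (x : S l), v l ≤ w l x)
    (R : ℕ → ℝ) (hR : ∀ l, ∑ x : S l, Real.exp (-(w l x) * R l) = 1)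
    (α : EReal) (hα : α = Filter.limsup (fun l => ((R l : ℝ) : EReal)) Filter.atTop)
    (hαtop : α ≠ ⊤) (hαbot : α ≠ ⊥) :
    (∀ s : ℝ, α < (s : EReal) →
      Summable (fun l => ∑ x : S l, Real.exp (-(w l x) * s))) ∧
    (∀ s : ℝ, (s : EReal) < α →
      Filter.Tendsto
        (fun n => ∑ l ∈ Finset.range n, ∑ x : S l, Real.exp (-(w l x) * s))
        Filter.atTop Filter.atTop) := by
  constructor
  · intro s hs
    set a : ℝ := α.toReal with ha
    have hae : α = (a : EReal) := (EReal.coe_toReal hαtop hαbot).symm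
    have has : a < s := by rw [hae] at hs; exact_mod_cast hs
    set β : ℝ := (a + s) / 2 with hβ
    set δ : ℝ := (s - a) / 2 with hδdef
    have hδ : 0 < δ := by rw [hδdef]; linarith
    have hsβδ : s = β + δ := by rw [hβ, hδdef]; ring
    have hev : ∀ᶠ l in Filter.atTop, R l < β := by
      have hlt : Filter.limsup (fun l => ((R l : ℝ) : EReal)) Filter.atTop < (β : EReal) := by
        rw [← hα, hae]
        exact_mod_cast (show a < β by rw [hβ]; linarith)
      filter_upwards [Filter.eventually_lt_of_limsup_lt hlt] with l hl
      exact_mod_cast hl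
    obtain ⟨N, hN⟩ := Filter.eventually_atTop.mp hev
    set F : ℕ → ℝ := fun l => ∑ x : S l, Real.exp (-(w l x) * s) with hF
    have hF0 : ∀ l, 0 ≤ F l := fun l => Finset.sum_nonneg fun x _ => (Real.exp_pos _).le
    have hbound : ∀ l, N ≤ l → F l ≤ Real.exp (-δ * v l) := by
      intro l hl
      have hRβ : R l ≤ β := (hN l hl).le
      calc F l = ∑ x : S l, Real.exp (-(w l x) * β) * Real.exp (-(w l x) * δ) := by
            refine Finset.sum_congr rfl fun x _ => ?_
            rw [← Real.exp_add]; congr 1; rw [hsβδ]; ring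
        _ ≤ ∑ x : S l, Real.exp (-(w l x) * β) * Real.exp (-δ * v l) := by
            refine Finset.sum_le_sum fun x _ => ?_
            refine mul_le_mul_of_nonneg_left ?_ (Real.exp_pos _).le
            apply Real.exp_le_exp.mpr
            nlinarith [hw l x, hδ]
        _ = (∑ x : S l, Real.exp (-(w l x) * β)) * Real.exp (-δ * v l) :=
            (Finset.sum_mul _ _ _).symm
        _ ≤ 1 * Real.exp (-δ * v l) := by
            refine mul_le_mul_of_nonneg_right ?_ (Real.exp_pos _).le
            calc (∑ x : S l, Real.exp (-(w l x) * β))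
                ≤ ∑ x : S l, Real.exp (-(w l x) * R l) := by
                  refine Finset.sum_le_sum fun x _ => ?_
                  apply Real.exp_le_exp.mpr
                  nlinarith [hw0 l x]
              _ = 1 := hR l
        _ = Real.exp (-δ * v l) := one_mul _
    have : Summable F := by
      rw [← summable_nat_add_iff N]
      exact Summable.of_nonneg_of_le (fun n => hF0 _)
        (fun n => hbound (n + N) (Nat.le_add_left N n))
        ((summable_nat_add_iff N).mpr (ntd_summable hv0 hvd hδ))
    exact this
  · intro s hs
    set F : ℕ → ℝ := fun l => ∑ x : S l, Real.exp (-(w l x) * s) with hF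
    have hF0 : ∀ l, 0 ≤ F l := fun l => Finset.sum_nonneg fun x _ => (Real.exp_pos _).le
    have hfreq : ∃ᶠ l in Filter.atTop, s < R l := by
      have hlt : (s : EReal) < Filter.limsup (fun l => ((R l : ℝ) : EReal)) Filter.atTop :=
        hα ▸ hs
      have h2 := Filter.frequently_lt_of_lt_limsup (h := hlt)
      exact h2.mono fun l hl => by exact_mod_cast hl
    have hge : ∃ᶠ l in Filter.atTop, 1 ≤ F l := by
      refine hfreq.mono fun l hl => ?_
      calc (1 : ℝ) = ∑ x : S l, Real.exp (-(w l x) * R l) := (hR l).symm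
        _ ≤ F l := by
            refine Finset.sum_le_sum fun x _ => ?_
            apply Real.exp_le_exp.mpr
            nlinarith [hw0 l x, hl.le]
    have hns : ¬ Summable F := by
      intro hsum
      have h0 := hsum.tendsto_atTop_zero
      have hev : ∀ᶠ l in Filter.atTop, F l < 1 := h0.eventually (gt_mem_nhds one_pos)
      obtain ⟨l, h1, h2⟩ := (hge.and_eventually hev).exists
      linarith
    exact (not_summable_iff_tendsto_nat_atTop_of_nonneg hF0).mp hns
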